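/- Let n1, n2, n3, n4, m be nonnegative integers with n1 > n2, n4 ≥ n3, and m > n2; let q = max(n1, n2, n3, n4, m) and let Q be the q×q shift matrix over 𝔽₂. Then there exist q×q matrices G_A, G_B over 𝔽₂ such that, with G_S = Q^{q−n3} G_A Q^{q−n1} + Q^{q−n4} G_B Q^{q−n2} and G_M = Q^{q−n3} G_A Q^{q−m} + Q^{q−n4} G_B Q^{q−m}, one has G_M = 0 and rank(G_S) − dim(range(G_S) ∩ range(G_M)) = min(n1, n3). -/

import Mathlib

/-- The `q × q` lower shift matrix over `𝔽₂`: entry `(i, j)` is `1` iff `i = j + 1`. -/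
def shiftQ (q : ℕ) : Matrix (Fin q) (Fin q) (ZMod 2) :=
  Matrix.of fun i j => if (i : ℕ) = (j : ℕ) + 1 then 1 else 0

/-- Source-to-destination transfer matrix
`G_S = Q^(q-n3) G_A Q^(q-n1) + Q^(q-n4) G_B Q^(q-n2)`. -/
def GSmat (q n1 n2 n3 n4 : ℕ) (GA GB : Matrix (Fin q) (Fin q) (ZMod 2)) :
    Matrix (Fin q) (Fin q) (ZMod 2) :=
  shiftQ q ^ (q - n3) * GA * shiftQ q ^ (q - n1) +
    shiftQ q ^ (q - n4) * GB * shiftQ q ^ (q - n2)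

/-- Interference transfer matrix
`G_M = Q^(q-n3) G_A Q^(q-m) + Q^(q-n4) G_B Q^(q-m)`. -/
def GMmat (q n3 n4 m : ℕ) (GA GB : Matrix (Fin q) (Fin q) (ZMod 2)) :
    Matrix (Fin q) (Fin q) (ZMod 2) :=
  shiftQ q ^ (q - n3) * GA * shiftQ q ^ (q - m) +
    shiftQ q ^ (q - n4) * GB * shiftQ q ^ (q - m)

/-- The achievable rate `rank G_S - dim (range G_S ∩ range G_M)` of a linear scheme. -/
noncomputable def linRate (q : ℕ) (GS GM : Matrix (Fin q) (Fin q) (ZMod 2)) : ℕ :=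
  GS.rank - Module.finrank (ZMod 2)
    ↥(LinearMap.range GS.mulVecLin ⊓ LinearMap.range GM.mulVecLin)

/-!
Take `G_A = (Q^(q-n1))ᵀ` and `G_B = Q^(n4-n3) G_A`, so that `Q^(q-n4) G_B = Q^(q-n3) G_A`: both
relays put the same signal on the disturbing link and over `𝔽₂` the two copies cancel, `G_M = 0`.
Writing `P_r` (`leadingProj`) for the projection onto the first `r` coordinates, we get
`G_A Q^(q-n1) = P_n1`, hence `G_S = Q^(q-n3) P_n1 (1 + Q^(n1-n2))`, and the last factor is
invertible because `Q` is nilpotent. Finally `(Q^k)ᵀ Q^k = P_(q-k)` and `Q^k P_(q-k) = Q^k` show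
that `Q^(q-n3) P_n1` and `P_n3 P_n1 = P_(min n1 n3)` each factor through the other, so they have
the same rank.
-/

open Matrix

def leadingProj (R : Type*) [Zero R] [One R] (q r : ℕ) : Matrix (Fin q) (Fin q) R :=
  diagonal fun j => if (j : ℕ) < r then 1 else 0

theorem leadingProj_mul_leadingProj {R : Type*} [NonAssocSemiring R] (q r s : ℕ) :
    leadingProj R q r * leadingProj R q s = leadingProj R q (min r s) := by
  unfold leadingProj
  rw [diagonal_mul_diagonal]
  congr 1
  funext j
  by_cases hr : (j : ℕ) < r <;> by_cases hs : (j : ℕ) < s <;> simp [hr, hs]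

theorem rank_leadingProj {K : Type*} [Field K] {q r : ℕ} (hr : r ≤ q) :
    (leadingProj K q r).rank = r := by
  classical
  rw [leadingProj, rank_diagonal]
  simp only [ne_eq, ite_eq_right_iff, one_ne_zero, imp_false, not_not]
  rw [Fintype.card_subtype, Fin.card_filter_val_lt]
  omega

theorem Matrix.rank_eq_rank_of_mul_eq {m n R : Type*} [Fintype m] [Fintype n] [CommSemiring R]
    [StrongRankCondition R] {A : Matrix m n R} {B : Matrix n m R} {C : Matrix n n R}
    (hBA : B * A = C) (hAC : A * C = A) : A.rank = C.rank :=
  le_antisymm (hAC ▸ rank_mul_le_right A C) (hBA ▸ rank_mul_le_right B A)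

theorem Fin.sum_ite_val_eq {R : Type*} [AddCommMonoid R] (q c : ℕ) (a : R) :
    ∑ t : Fin q, (if (t : ℕ) = c then a else 0) = if c < q then a else 0 := by
  rw [Fin.sum_univ_eq_sum_range (fun t => if t = c then a else 0), Finset.sum_ite_eq']
  simp only [Finset.mem_range]

theorem shiftQ_pow_apply (q k : ℕ) (i j : Fin q) :
    (shiftQ q ^ k) i j = if (i : ℕ) = j + k then 1 else 0 := by
  induction k generalizing i j with
  | zero => simp [one_apply, Fin.ext_iff]
  | succ k ih =>
    have hterm : ∀ t : Fin q, (shiftQ q ^ k) i t * shiftQ q t j =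
        if (t : ℕ) = j + 1 then if (i : ℕ) = j + (k + 1) then 1 else 0 else 0 := by
      intro t
      rw [ih, shiftQ, of_apply]
      split_ifs <;> first | omega | simp
    rw [pow_succ, mul_apply, Fintype.sum_congr _ _ hterm, Fin.sum_ite_val_eq]
    split_ifs <;> first | rfl | omega

theorem shiftQ_pow_eq_zero {q k : ℕ} (hk : q ≤ k) : shiftQ q ^ k = 0 := by
  ext i j
  rw [shiftQ_pow_apply, if_neg (by omega), Matrix.zero_apply]

theorem isNilpotent_shiftQ (q : ℕ) : IsNilpotent (shiftQ q) :=
  ⟨q, shiftQ_pow_eq_zero le_rfl⟩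

theorem shiftQ_pow_transpose_mul_self (q k : ℕ) :
    (shiftQ q ^ k)ᵀ * shiftQ q ^ k = leadingProj (ZMod 2) q (q - k) := by
  ext l j
  have hterm : ∀ t : Fin q, (shiftQ q ^ k)ᵀ l t * (shiftQ q ^ k) t j =
      if (t : ℕ) = j + k then if l = j then 1 else 0 else 0 := by
    intro t
    rw [transpose_apply, shiftQ_pow_apply, shiftQ_pow_apply]
    split_ifs <;> simp_all [Fin.ext_iff]
  rw [mul_apply, Fintype.sum_congr _ _ hterm, Fin.sum_ite_val_eq, leadingProj, diagonal_apply]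
  split_ifs <;> simp_all <;> omega

theorem shiftQ_pow_mul_leadingProj (q k : ℕ) :
    shiftQ q ^ k * leadingProj (ZMod 2) q (q - k) = shiftQ q ^ k := by
  ext i j
  rw [leadingProj, mul_diagonal, shiftQ_pow_apply]
  by_cases h : (i : ℕ) = j + k
  · have := i.isLt
    simp [h, show (j : ℕ) < q - k by omega]
  · simp [h]

theorem rank_shiftQ_pow_mul_leadingProj {q r : ℕ} (k : ℕ) (hr : r ≤ q) :
    (shiftQ q ^ k * leadingProj (ZMod 2) q r).rank = min (q - k) r := by
  rw [← rank_leadingProj (K := ZMod 2) (show min (q - k) r ≤ q by omega)]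
  refine rank_eq_rank_of_mul_eq (B := (shiftQ q ^ k)ᵀ) ?_ ?_
  · rw [← mul_assoc, shiftQ_pow_transpose_mul_self, leadingProj_mul_leadingProj]
  · calc shiftQ q ^ k * leadingProj (ZMod 2) q r * leadingProj (ZMod 2) q (min (q - k) r)
        = shiftQ q ^ k * leadingProj (ZMod 2) q (q - k) * leadingProj (ZMod 2) q r := by
          rw [mul_assoc, mul_assoc, leadingProj_mul_leadingProj, leadingProj_mul_leadingProj,
            min_left_comm, min_self]
      _ = shiftQ q ^ k * leadingProj (ZMod 2) q r := by rw [shiftQ_pow_mul_leadingProj]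

theorem linRate_zero_right (q : ℕ) (GS : Matrix (Fin q) (Fin q) (ZMod 2)) :
    linRate q GS 0 = GS.rank := by
  rw [linRate, mulVecLin_zero, LinearMap.range_zero, inf_bot_eq, finrank_bot, Nat.sub_zero]

theorem rate_achievable_case4_general
    (n1 n2 n3 n4 m q : ℕ) (hq : q = max n1 (max n2 (max n3 (max n4 m))))
    (h12 : n2 < n1) (h34 : n3 ≤ n4) :
    ∃ GA GB : Matrix (Fin q) (Fin q) (ZMod 2),
      GMmat q n3 n4 m GA GB = 0 ∧
      linRate q (GSmat q n1 n2 n3 n4 GA GB) (GMmat q n3 n4 m GA GB)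
        = min n1 n3 := by
  set Q := shiftQ q
  set GA := (Q ^ (q - n1))ᵀ
  have hB : Q ^ (q - n4) * (Q ^ (n4 - n3) * GA) = Q ^ (q - n3) * GA := by
    rw [← mul_assoc, ← pow_add, show q - n4 + (n4 - n3) = q - n3 by omega]
  have hGM : GMmat q n3 n4 m GA (Q ^ (n4 - n3) * GA) = 0 := by
    ext i j
    rw [GMmat, hB, Matrix.add_apply, CharTwo.add_self_eq_zero, Matrix.zero_apply]
  have hGS : GSmat q n1 n2 n3 n4 GA (Q ^ (n4 - n3) * GA)
      = Q ^ (q - n3) * leadingProj (ZMod 2) q n1 * (1 + Q ^ (n1 - n2)) := by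
    have hA : GA * Q ^ (q - n1) = leadingProj (ZMod 2) q n1 := by
      rw [shiftQ_pow_transpose_mul_self, show q - (q - n1) = n1 by omega]
    rw [GSmat, hB, show q - n2 = q - n1 + (n1 - n2) by omega, pow_add, mul_add, mul_one,
      ← mul_assoc, mul_assoc _ GA, hA]
  have hunit : IsUnit (1 + Q ^ (n1 - n2)).det :=
    (isUnit_iff_isUnit_det _).mp ((isNilpotent_shiftQ q).pow_of_pos (by omega)).isUnit_one_add
  refine ⟨GA, Q ^ (n4 - n3) * GA, hGM, ?_⟩
  rw [hGM, linRate_zero_right, hGS, rank_mul_eq_left_of_isUnit_det _ _ hunit,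
    rank_shiftQ_pow_mul_leadingProj _ (by omega)]
  omega

/-- Case `n1 > n2`, `n4 ≥ n3`, `m > n2`: the upper bound is achievable with `G_M = 0`. -/
theorem rate_achievable_case4
    (n1 n2 n3 n4 m q : ℕ) (hq : q = max n1 (max n2 (max n3 (max n4 m))))
    (h12 : n2 < n1) (h34 : n3 ≤ n4) (hm : n2 < m) :
    ∃ GA GB : Matrix (Fin q) (Fin q) (ZMod 2),
      GMmat q n3 n4 m GA GB = 0 ∧
      linRate q (GSmat q n1 n2 n3 n4 GA GB) (GMmat q n3 n4 m GA GB)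
        = min n1 n3 :=
  rate_achievable_case4_general n1 n2 n3 n4 m q hq h12 h34
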